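/- arXiv:2004.05370 — 11 statements merged into one kernel-verified Lean document; each statement's English description precedes it below -/
import Mathlib

section
/- Let Q be a left quasigroup, α a congruence on Q, Dis(Q) the displacement group, and Dis^α = {h ∈ Dis(Q) : h(a) α a for all a ∈ Q}. Then the quotient left quasigroup Q/α is faithful if and only if α equals the relation c_{Dis^α} = {(a,b) : L_a L_b^{-1} ∈ Dis^α}. -/
/-!
Every `L a * (L b)⁻¹` lies in `Dis L`, and since `c ↦ b \ c` is a bijection, the condition
"`L a L b⁻¹` moves every element within its `α`-class" says exactly that `a c α b c` for all `c`,
i.e. that `L a` and `L b` agree modulo `α`. So `c_{Dis^α}` is the kernel of `a ↦ L_{a/α}`, which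
always contains `α`; it equals `α` precisely when `Q/α` is faithful.
-/

/-- The displacement group of a left quasigroup. -/
def Dis {Q : Type*} (L : Q → Equiv.Perm Q) : Subgroup (Equiv.Perm Q) :=
  Subgroup.closure {x : Equiv.Perm Q | ∃ a b : Q, x = L a * (L b)⁻¹}

theorem mul_inv_mem_Dis {Q : Type*} (L : Q → Equiv.Perm Q) (a b : Q) :
    L a * (L b)⁻¹ ∈ Dis L :=
  Subgroup.subset_closure ⟨a, b, rfl⟩

section LeftQuasigroup

variable {Q : Type*} {mul ld : Q → Q → Q} {L : Q → Equiv.Perm Q}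

theorem leftTranslation_inv_apply (h1 : ∀ x y, mul x (ld x y) = y)
    (hL : ∀ a b : Q, L a b = mul a b) (b c : Q) : (L b)⁻¹ c = ld b c := by
  rw [Equiv.Perm.inv_eq_iff_eq, hL, h1]

theorem leftTranslation_mul_inv_apply (h1 : ∀ x y, mul x (ld x y) = y)
    (hL : ∀ a b : Q, L a b = mul a b) (a b c : Q) :
    (L a * (L b)⁻¹) c = mul a (ld b c) := by
  rw [Equiv.Perm.mul_apply, leftTranslation_inv_apply h1 hL, hL]

theorem forall_rel_mul_inv_apply_iff (h1 : ∀ x y, mul x (ld x y) = y)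
    (h2 : ∀ x y, ld x (mul x y) = y) (hL : ∀ a b : Q, L a b = mul a b)
    (r : Q → Q → Prop) (a b : Q) :
    (∀ c, r ((L a * (L b)⁻¹) c) c) ↔ ∀ c, r (mul a c) (mul b c) := by
  simp only [leftTranslation_mul_inv_apply h1 hL]
  constructor
  · intro h c
    simpa only [h2] using h (mul b c)
  · intro h c
    simpa only [h1] using h (ld b c)

end LeftQuasigroup

/-- Q/α is faithful iff α = c_{Dis^α}. -/
theorem stmt_4 {Q : Type*} (mul ld : Q → Q → Q)
    (h1 : ∀ x y, mul x (ld x y) = y) (h2 : ∀ x y, ld x (mul x y) = y)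
    (L : Q → Equiv.Perm Q) (hL : ∀ a b : Q, L a b = mul a b)
    (r : Q → Q → Prop) (hequiv : Equivalence r)
    (hcong : ∀ a b c d, r a c → r b d → r (mul a b) (mul c d) ∧ r (ld a b) (ld c d)) :
    (∀ a b : Q, (∀ c, r (mul a c) (mul b c)) → r a b) ↔
      (∀ a b : Q, r a b ↔
        (L a * (L b)⁻¹ ∈ Dis L ∧ ∀ c : Q, r ((L a * (L b)⁻¹) c) c)) := by
  have rel_mul_right : ∀ a b, r a b → ∀ c, r (mul a c) (mul b c) := fun a b hab c =>
    (hcong a c b c hab (hequiv.refl c)).1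
  simp only [mul_inv_mem_Dis, true_and, forall_rel_mul_inv_apply_iff h1 h2 hL]
  exact ⟨fun hf a b => ⟨rel_mul_right a b, hf a b⟩, fun hc a b => (hc a b).2⟩
end

section
/- Let Q be a left quasigroup and N ≤ Sym(Q) such that N is normalized by LMlt(Q) and Dis_{O_N} ≤ N, where O_N is the orbit equivalence relation of N on Q and Dis_{O_N} is the normal closure in LMlt(Q) of {L_a L_b^{-1} : a, b in the same N-orbit}. Then O_N is a congruence of Q. -/
/-- The left multiplication group of a left quasigroup. -/
def LMlt {Q : Type*} (L : Q → Equiv.Perm Q) : Subgroup (Equiv.Perm Q) :=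
  Subgroup.closure (Set.range L)

/-- The relative displacement group Dis_r : the normal closure in LMlt(Q) of
{L_a L_b⁻¹ : r a b}. -/
def disRel {Q : Type*} (L : Q → Equiv.Perm Q) (r : Q → Q → Prop) :
    Subgroup (Equiv.Perm Q) :=
  Subgroup.closure
    {x : Equiv.Perm Q | ∃ g ∈ LMlt L, ∃ a b : Q, r a b ∧ x = g * (L a * (L b)⁻¹) * g⁻¹}

/-- If N ≤ Sym(Q) is normalized by LMlt(Q) and Dis_{O_N} ≤ N, then the orbit
relation O_N is a congruence. -/
theorem stmt_6 {Q : Type*} (mul ld : Q → Q → Q)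
    (h1 : ∀ x y, mul x (ld x y) = y) (h2 : ∀ x y, ld x (mul x y) = y)
    (L : Q → Equiv.Perm Q) (hL : ∀ a b : Q, L a b = mul a b)
    (N : Subgroup (Equiv.Perm Q))
    (hnorm : ∀ g ∈ LMlt L, ∀ n ∈ N, g * n * g⁻¹ ∈ N)
    (hdis : disRel L (fun a b => ∃ n ∈ N, n b = a) ≤ N) :
    Equivalence (fun a b : Q => ∃ n ∈ N, n b = a) ∧
      ∀ a b c d : Q, (∃ n ∈ N, n c = a) → (∃ n ∈ N, n d = b) →
        (∃ n ∈ N, n (mul c d) = mul a b) ∧ (∃ n ∈ N, n (ld c d) = ld a b) := by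
  have hLmem : ∀ x : Q, L x ∈ LMlt L :=
    fun x => Subgroup.subset_closure (Set.mem_range_self x)
  have hld : ∀ x y : Q, (L x)⁻¹ y = ld x y := by
    intro x y
    have : L x (ld x y) = y := by rw [hL, h1]
    conv_lhs => rw [← this]
    simp
  constructor
  · refine ⟨fun a => ⟨1, one_mem N, rfl⟩, ?_, ?_⟩
    · rintro a b ⟨n, hn, rfl⟩
      exact ⟨n⁻¹, inv_mem hn, by simp⟩
    · rintro a b c ⟨n, hn, rfl⟩ ⟨m, hm, rfl⟩
      exact ⟨n * m, mul_mem hn hm, by simp⟩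
  · rintro a b c d ⟨n, hn, rfl⟩ ⟨m, hm, rfl⟩
    -- set a := n c, b := m d
    have hac : (L (n c)) * (L c)⁻¹ ∈ N :=
      hdis (Subgroup.subset_closure ⟨1, one_mem _, n c, c, ⟨n, hn, rfl⟩, by group⟩)
    have hca : (L (n c))⁻¹ * (L c) ∈ N := by
      have : (L (n c))⁻¹ * (L c * (L (n c))⁻¹) * (L (n c)) ∈ N :=
        hdis (Subgroup.subset_closure ⟨(L (n c))⁻¹, inv_mem (hLmem _), c, n c,
          ⟨n⁻¹, inv_mem hn, by simp⟩, by group⟩)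
      convert this using 1
      group
    constructor
    · refine ⟨(L (n c)) * m * (L (n c))⁻¹ * ((L (n c)) * (L c)⁻¹),
        mul_mem (hnorm _ (hLmem _) _ hm) hac, ?_⟩
      have e1 : mul c d = L c d := (hL c d).symm
      have e2 : mul (n c) (m d) = L (n c) (m d) := (hL _ _).symm
      rw [e1, e2]
      simp [Equiv.Perm.mul_apply]
    · refine ⟨(L (n c))⁻¹ * m * (L (n c)) * ((L (n c))⁻¹ * (L c)),
        mul_mem ?_ hca, ?_⟩
      · have := hnorm (L (n c))⁻¹ (inv_mem (hLmem _)) m hm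
        simpa using this
      · rw [← hld c d, ← hld (n c) (m d)]
        simp [Equiv.Perm.mul_apply]
end

section
/- Let Q be a left quasigroup, α a congruence of Q, and N ∈ Norm(Q) an admissible subgroup (a normal subgroup N of LMlt(Q) with Dis_{O_N} ≤ N). Then the relations α and O_N permute: α ∘ O_N = O_N ∘ α. -/
def relAut {Q : Type*} (r : Q → Q → Prop) : Subgroup (Equiv.Perm Q) where
  carrier := {g | ∀ x y, r (g x) (g y) ↔ r x y}
  one_mem' := by simp
  mul_mem' {g h} hg hh x y := by
    rw [Equiv.Perm.mul_apply, Equiv.Perm.mul_apply, hg, hh]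
  inv_mem' {g} hg x y := by
    simpa only [Equiv.Perm.coe_inv, Equiv.apply_symm_apply] using (hg (g⁻¹ x) (g⁻¹ y)).symm

section

variable {Q : Type*} {r : Q → Q → Prop}

theorem LMlt_le_relAut (mul ld : Q → Q → Q) (hld : ∀ x y, ld x (mul x y) = y)
    (L : Q → Equiv.Perm Q) (hL : ∀ a b : Q, L a b = mul a b) (hrefl : ∀ a, r a a)
    (hcong : ∀ a b c d, r a c → r b d → r (mul a b) (mul c d) ∧ r (ld a b) (ld c d)) :
    LMlt L ≤ relAut r := by
  refine Subgroup.closure_le _ |>.2 <| Set.range_subset_iff.2 fun a x y => ?_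
  rw [hL, hL]
  refine ⟨fun h => ?_, fun h => (hcong a x a y (hrefl a) h).1⟩
  simpa only [hld] using (hcong a (mul a x) a (mul a y) (hrefl a) h).2

theorem rel_comp_orbit_iff_orbit_comp_rel {N : Subgroup (Equiv.Perm Q)}
    (hN : N ≤ relAut r) (a b : Q) :
    (∃ c, r a c ∧ ∃ n ∈ N, n b = c) ↔ (∃ c, (∃ n ∈ N, n c = a) ∧ r c b) := by
  constructor
  · rintro ⟨_, hac, n, hn, rfl⟩
    refine ⟨n⁻¹ a, ⟨n, hn, n.apply_symm_apply a⟩, ?_⟩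
    simpa only [Equiv.Perm.coe_inv, Equiv.symm_apply_apply] using
      (hN (N.inv_mem hn) a (n b)).2 hac
  · rintro ⟨c, ⟨n, hn, rfl⟩, hcb⟩
    exact ⟨n b, (hN hn c b).2 hcb, n, hn, rfl⟩

end

theorem stmt_8_general {Q : Type*} (mul ld : Q → Q → Q)
    (h2 : ∀ x y, ld x (mul x y) = y)
    (L : Q → Equiv.Perm Q) (hL : ∀ a b : Q, L a b = mul a b)
    (r : Q → Q → Prop) (hequiv : Equivalence r)
    (hcong : ∀ a b c d, r a c → r b d → r (mul a b) (mul c d) ∧ r (ld a b) (ld c d))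
    (N : Subgroup (Equiv.Perm Q)) (hle : N ≤ LMlt L) :
    ∀ a b : Q, (∃ c, r a c ∧ ∃ n ∈ N, n b = c) ↔ (∃ c, (∃ n ∈ N, n c = a) ∧ r c b) :=
  rel_comp_orbit_iff_orbit_comp_rel (hle.trans (LMlt_le_relAut mul ld h2 L hL hequiv.refl hcong))

/-- For a congruence α and an admissible subgroup N, the relations α and O_N
permute: α ∘ O_N = O_N ∘ α. -/
theorem stmt_8 {Q : Type*} (mul ld : Q → Q → Q)
    (h1 : ∀ x y, mul x (ld x y) = y) (h2 : ∀ x y, ld x (mul x y) = y)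
    (L : Q → Equiv.Perm Q) (hL : ∀ a b : Q, L a b = mul a b)
    (r : Q → Q → Prop) (hequiv : Equivalence r)
    (hcong : ∀ a b c d, r a c → r b d → r (mul a b) (mul c d) ∧ r (ld a b) (ld c d))
    (N : Subgroup (Equiv.Perm Q)) (hle : N ≤ LMlt L)
    (hnorm : ∀ g ∈ LMlt L, ∀ n ∈ N, g * n * g⁻¹ ∈ N)
    (hadm : disRel L (fun a b => ∃ n ∈ N, n b = a) ≤ N) :
    ∀ a b : Q, (∃ c, r a c ∧ ∃ n ∈ N, n b = c) ↔ (∃ c, (∃ n ∈ N, n c = a) ∧ r c b) :=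
  stmt_8_general mul ld h2 L hL r hequiv hcong N hle
end

section
/- Let Q be a left quasigroup and N ≤ Aut(Q) (N a subgroup of the automorphism group of Q). Then LMlt(Q) normalizes N if and only if Dis_{O_N} ≤ N. In particular, for a rack Q, every normal subgroup of LMlt(Q) is admissible. -/
def autPerm {Q : Type*} (mul : Q → Q → Q) : Subgroup (Equiv.Perm Q) where
  carrier := {g | ∀ a b, g (mul a b) = mul (g a) (g b)}
  one_mem' _ _ := rfl
  mul_mem' {x y} hx hy a b := by
    simp only [Equiv.Perm.mul_apply, hy a b, hx (y a) (y b)]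
  inv_mem' {x} hx a b := x.injective <| by
    rw [hx]
    simp only [Equiv.Perm.coe_inv, Equiv.apply_symm_apply]

/-- The paper's `O_N`. -/
def permOrbitRel {Q : Type*} (N : Subgroup (Equiv.Perm Q)) (a b : Q) : Prop :=
  ∃ n ∈ N, n b = a

section

variable {Q : Type*} {mul : Q → Q → Q} {L : Q → Equiv.Perm Q}

theorem LMlt_le_autPerm (hL : ∀ a b, L a b = mul a b)
    (hdist : ∀ x y z, mul x (mul y z) = mul (mul x y) (mul x z)) :
    LMlt L ≤ autPerm mul := by
  refine (Subgroup.closure_le _).mpr ?_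
  rintro _ ⟨a, rfl⟩ y z
  simp only [hL]
  exact hdist a y z

theorem conj_leftMul_of_mem_autPerm (hL : ∀ a b, L a b = mul a b) {n : Equiv.Perm Q}
    (hn : n ∈ autPerm mul) (b : Q) : n * L b * n⁻¹ = L (n b) := by
  ext x
  simp only [Equiv.Perm.mul_apply, hL, hn _ _, Equiv.Perm.coe_inv, Equiv.apply_symm_apply]

theorem leftMul_mem_LMlt (a : Q) : L a ∈ LMlt L :=
  Subgroup.subset_closure ⟨a, rfl⟩

theorem conj_mem_disRel {r : Q → Q → Prop} {g : Equiv.Perm Q} (hg : g ∈ LMlt L) {a b : Q}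
    (hab : r a b) : g * (L a * (L b)⁻¹) * g⁻¹ ∈ disRel L r :=
  Subgroup.subset_closure ⟨g, hg, a, b, hab, rfl⟩

variable {N : Subgroup (Equiv.Perm Q)}

theorem disRel_le_of_conj_mem (hL : ∀ a b, L a b = mul a b) (hN : N ≤ autPerm mul)
    (hconj : ∀ g ∈ LMlt L, ∀ n ∈ N, g * n * g⁻¹ ∈ N) :
    disRel L (permOrbitRel N) ≤ N := by
  refine (Subgroup.closure_le N).mpr ?_
  rintro _ ⟨g, hg, _, b, ⟨n, hn, rfl⟩, rfl⟩
  refine hconj g hg _ ?_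
  have hcomm : L b * n⁻¹ * (L b)⁻¹ ∈ N := hconj _ (leftMul_mem_LMlt b) _ (inv_mem hn)
  have hsplit : L (n b) * (L b)⁻¹ = n * (L b * n⁻¹ * (L b)⁻¹) := by
    rw [← conj_leftMul_of_mem_autPerm hL (hN hn)]
    group
  rw [hsplit]
  exact mul_mem hn hcomm

theorem leftMul_mem_normalizer (hL : ∀ a b, L a b = mul a b) (hN : N ≤ autPerm mul)
    (hdis : disRel L (permOrbitRel N) ≤ N) (a : Q) :
    L a ∈ Subgroup.normalizer (N : Set (Equiv.Perm Q)) := by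
  have hconj : ∀ n ∈ N, L a * n * (L a)⁻¹ ∈ N := by
    intro n hn
    have hgen : L (n⁻¹ a) * (L a)⁻¹ ∈ N := by
      simpa using hdis (conj_mem_disRel (one_mem _) ⟨n⁻¹, inv_mem hn, rfl⟩)
    have hsplit : L a * n * (L a)⁻¹ = n * (L (n⁻¹ a) * (L a)⁻¹) := by
      rw [← conj_leftMul_of_mem_autPerm hL (hN (inv_mem hn)), inv_inv]
      group
    rw [hsplit]
    exact mul_mem hn hgen
  have hconj_inv : ∀ n ∈ N, (L a)⁻¹ * n * L a ∈ N := by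
    intro n hn
    have hgen : (L a)⁻¹ * L (n a) ∈ N := by
      simpa [mul_assoc] using
        hdis (conj_mem_disRel (b := a) (inv_mem (leftMul_mem_LMlt a)) ⟨n, hn, rfl⟩)
    have hsplit : (L a)⁻¹ * n * L a = (L a)⁻¹ * L (n a) * n := by
      rw [← conj_leftMul_of_mem_autPerm hL (hN hn)]
      group
    rw [hsplit]
    exact mul_mem hgen hn
  refine Subgroup.mem_normalizer_iff.mpr fun n => ⟨hconj n, fun h => ?_⟩
  simpa [mul_assoc] using hconj_inv _ h

theorem conj_mem_of_disRel_le (hL : ∀ a b, L a b = mul a b) (hN : N ≤ autPerm mul)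
    (hdis : disRel L (permOrbitRel N) ≤ N) :
    ∀ g ∈ LMlt L, ∀ n ∈ N, g * n * g⁻¹ ∈ N := by
  have hLMlt : LMlt L ≤ Subgroup.normalizer (N : Set (Equiv.Perm Q)) :=
    (Subgroup.closure_le _).mpr <| Set.range_subset_iff.mpr <|
      leftMul_mem_normalizer hL hN hdis
  exact fun g hg n hn => (Subgroup.mem_normalizer_iff.mp (hLMlt hg) n).mp hn

end

theorem stmt_9_general {Q : Type*} (mul : Q → Q → Q)
    (L : Q → Equiv.Perm Q) (hL : ∀ a b : Q, L a b = mul a b)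
    (N : Subgroup (Equiv.Perm Q))
    (hAut : ∀ n ∈ N, ∀ a b : Q, n (mul a b) = mul (n a) (n b)) :
    ((∀ g ∈ LMlt L, ∀ n ∈ N, g * n * g⁻¹ ∈ N) ↔
      disRel L (fun a b => ∃ n ∈ N, n b = a) ≤ N) ∧
    ((∀ x y z : Q, mul x (mul y z) = mul (mul x y) (mul x z)) →
      ∀ M : Subgroup (Equiv.Perm Q), M ≤ LMlt L →
        (∀ g ∈ LMlt L, ∀ m ∈ M, g * m * g⁻¹ ∈ M) →
        disRel L (fun a b => ∃ m ∈ M, m b = a) ≤ M) := by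
  have hN : N ≤ autPerm mul := hAut
  refine ⟨⟨disRel_le_of_conj_mem hL hN, conj_mem_of_disRel_le hL hN⟩, ?_⟩
  intro hdist M hM hconj
  exact disRel_le_of_conj_mem hL (hM.trans (LMlt_le_autPerm hL hdist)) hconj

/-- For N ≤ Aut(Q): LMlt(Q) normalizes N iff Dis_{O_N} ≤ N. In particular,
for a rack, every normal subgroup of LMlt(Q) is admissible. -/
theorem stmt_9 {Q : Type*} (mul ld : Q → Q → Q)
    (h1 : ∀ x y, mul x (ld x y) = y) (h2 : ∀ x y, ld x (mul x y) = y)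
    (L : Q → Equiv.Perm Q) (hL : ∀ a b : Q, L a b = mul a b)
    (N : Subgroup (Equiv.Perm Q))
    (hAut : ∀ n ∈ N, ∀ a b : Q, n (mul a b) = mul (n a) (n b)) :
    ((∀ g ∈ LMlt L, ∀ n ∈ N, g * n * g⁻¹ ∈ N) ↔
      disRel L (fun a b => ∃ n ∈ N, n b = a) ≤ N) ∧
    ((∀ x y z : Q, mul x (mul y z) = mul (mul x y) (mul x z)) →
      ∀ M : Subgroup (Equiv.Perm Q), M ≤ LMlt L →
        (∀ g ∈ LMlt L, ∀ m ∈ M, g * m * g⁻¹ ∈ M) →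
        disRel L (fun a b => ∃ m ∈ M, m b = a) ≤ M) :=
  stmt_9_general mul L hL N hAut
end

section
/- Let Q be a semimedial left quasigroup and α a congruence. Then Dis_α (the normal closure in LMlt(Q) of {L_a L_b^{-1} : a α b}) equals the subgroup generated by {L_a^{-1} L_b : a α b}. -/
def relInvMulSet {Q : Type*} (L : Q → Equiv.Perm Q) (r : Q → Q → Prop) :
    Set (Equiv.Perm Q) :=
  {x | ∃ a b : Q, r a b ∧ x = (L a)⁻¹ * L b}

namespace Semimedial

variable {Q : Type*} {mul ld : Q → Q → Q} {L : Q → Equiv.Perm Q} {r : Q → Q → Prop}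

theorem L_mul_self_mul_L (hL : ∀ a b, L a b = mul a b)
    (hsm : ∀ x y z, mul (mul x x) (mul y z) = mul (mul x y) (mul x z)) (x y : Q) :
    L (mul x x) * L y = L (mul x y) * L x := by
  ext z
  simp only [Equiv.Perm.coe_mul, Function.comp_apply, hL]
  exact hsm x y z

theorem L_mul_inv_L (hL : ∀ a b, L a b = mul a b)
    (hsm : ∀ x y z, mul (mul x x) (mul y z) = mul (mul x y) (mul x z)) (x y : Q) :
    L y * (L x)⁻¹ = (L (mul x x))⁻¹ * L (mul x y) := by
  rw [eq_inv_mul_iff_mul_eq, ← mul_assoc, L_mul_self_mul_L hL hsm, mul_inv_cancel_right]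

theorem conj_inv_L_mul_L (hL : ∀ a b, L a b = mul a b)
    (hsm : ∀ x y z, mul (mul x x) (mul y z) = mul (mul x y) (mul x z)) (x a b : Q) :
    L x * ((L a)⁻¹ * L b) * (L x)⁻¹ = (L (mul x a))⁻¹ * L (mul x b) :=
  calc L x * ((L a)⁻¹ * L b) * (L x)⁻¹ = (L a * (L x)⁻¹)⁻¹ * (L b * (L x)⁻¹) := by group
    _ = (L (mul x a))⁻¹ * L (mul x b) := by
      rw [L_mul_inv_L hL hsm x a, L_mul_inv_L hL hsm x b]; group

theorem L_mem_normalizer_relInvMulSet (hL : ∀ a b, L a b = mul a b)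
    (h1 : ∀ x y, mul x (ld x y) = y)
    (hsm : ∀ x y z, mul (mul x x) (mul y z) = mul (mul x y) (mul x z))
    (hmul : ∀ x a b, r a b → r (mul x a) (mul x b))
    (hld : ∀ x a b, r a b → r (ld x a) (ld x b)) (x : Q) :
    L x ∈ Subgroup.normalizer (relInvMulSet L r) := by
  refine Subgroup.mem_set_normalizer_iff.mpr fun g ↦ ⟨?_, ?_⟩
  · rintro ⟨a, b, hab, rfl⟩
    exact ⟨mul x a, mul x b, hmul x a b hab, conj_inv_L_mul_L hL hsm x a b⟩
  · rintro ⟨a, b, hab, hg⟩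
    refine ⟨ld x a, ld x b, hld x a b hab, (MulAut.conj (L x)).injective ?_⟩
    simp only [MulAut.conj_apply, hg, conj_inv_L_mul_L hL hsm, h1]

theorem LMlt_le_normalizer_closure_relInvMulSet (hL : ∀ a b, L a b = mul a b)
    (h1 : ∀ x y, mul x (ld x y) = y)
    (hsm : ∀ x y z, mul (mul x x) (mul y z) = mul (mul x y) (mul x z))
    (hmul : ∀ x a b, r a b → r (mul x a) (mul x b))
    (hld : ∀ x a b, r a b → r (ld x a) (ld x b)) :
    LMlt L ≤ Subgroup.normalizer (Subgroup.closure (relInvMulSet L r) : Set (Equiv.Perm Q)) := by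
  refine le_trans ?_ (Subgroup.normalizer_le_normalizer_closure _)
  rw [LMlt, Subgroup.closure_le]
  rintro _ ⟨x, rfl⟩
  exact L_mem_normalizer_relInvMulSet hL h1 hsm hmul hld x

theorem L_mul_inv_L_mem_closure_relInvMulSet (hL : ∀ a b, L a b = mul a b)
    (hsm : ∀ x y z, mul (mul x x) (mul y z) = mul (mul x y) (mul x z))
    (hmul : ∀ x a b, r a b → r (mul x a) (mul x b)) (hsymm : ∀ {a b}, r a b → r b a) {a b : Q}
    (hab : r a b) :
    L a * (L b)⁻¹ ∈ Subgroup.closure (relInvMulSet L r) := by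
  rw [L_mul_inv_L hL hsm b a]
  exact Subgroup.subset_closure ⟨mul b b, mul b a, hmul b b a (hsymm hab), rfl⟩

theorem disRel_le_closure_relInvMulSet (hL : ∀ a b, L a b = mul a b)
    (h1 : ∀ x y, mul x (ld x y) = y)
    (hsm : ∀ x y z, mul (mul x x) (mul y z) = mul (mul x y) (mul x z))
    (hmul : ∀ x a b, r a b → r (mul x a) (mul x b))
    (hld : ∀ x a b, r a b → r (ld x a) (ld x b)) (hsymm : ∀ {a b}, r a b → r b a) :
    disRel L r ≤ Subgroup.closure (relInvMulSet L r) := by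
  rw [disRel, Subgroup.closure_le]
  rintro _ ⟨g, hg, a, b, hab, rfl⟩
  exact (Subgroup.mem_normalizer_iff.mp
    (LMlt_le_normalizer_closure_relInvMulSet hL h1 hsm hmul hld hg) _).mp
    (L_mul_inv_L_mem_closure_relInvMulSet hL hsm hmul hsymm hab)

end Semimedial

theorem closure_relInvMulSet_le_disRel {Q : Type*} {L : Q → Equiv.Perm Q} {r : Q → Q → Prop}
    (hsymm : ∀ {a b}, r a b → r b a) :
    Subgroup.closure (relInvMulSet L r) ≤ disRel L r := by
  rw [Subgroup.closure_le]
  rintro _ ⟨a, b, hab, rfl⟩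
  refine Subgroup.subset_closure ⟨(L a)⁻¹, inv_mem (Subgroup.subset_closure ⟨a, rfl⟩),
    b, a, hsymm hab, ?_⟩
  group

theorem stmt_12_general {Q : Type*} (mul ld : Q → Q → Q)
    (h1 : ∀ x y, mul x (ld x y) = y)
    (hsm : ∀ x y z, mul (mul x x) (mul y z) = mul (mul x y) (mul x z))
    (L : Q → Equiv.Perm Q) (hL : ∀ a b : Q, L a b = mul a b)
    (r : Q → Q → Prop) (hequiv : Equivalence r)
    (hcong : ∀ a b c d, r a c → r b d → r (mul a b) (mul c d) ∧ r (ld a b) (ld c d)) :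
    disRel L r =
      Subgroup.closure {x : Equiv.Perm Q | ∃ a b : Q, r a b ∧ x = (L a)⁻¹ * L b} := by
  have hmul : ∀ x a b, r a b → r (mul x a) (mul x b) :=
    fun x _ _ hab ↦ (hcong _ _ _ _ (hequiv.refl x) hab).1
  have hld : ∀ x a b, r a b → r (ld x a) (ld x b) :=
    fun x _ _ hab ↦ (hcong _ _ _ _ (hequiv.refl x) hab).2
  exact le_antisymm
    (Semimedial.disRel_le_closure_relInvMulSet hL h1 hsm hmul hld hequiv.symm)
    (closure_relInvMulSet_le_disRel hequiv.symm)

/-- For a semimedial left quasigroup and a congruence α,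
Dis_α = ⟨L_a⁻¹ L_b : a α b⟩. -/
theorem stmt_12 {Q : Type*} (mul ld : Q → Q → Q)
    (h1 : ∀ x y, mul x (ld x y) = y) (h2 : ∀ x y, ld x (mul x y) = y)
    (hsm : ∀ x y z, mul (mul x x) (mul y z) = mul (mul x y) (mul x z))
    (L : Q → Equiv.Perm Q) (hL : ∀ a b : Q, L a b = mul a b)
    (r : Q → Q → Prop) (hequiv : Equivalence r)
    (hcong : ∀ a b c d, r a c → r b d → r (mul a b) (mul c d) ∧ r (ld a b) (ld c d)) :
    disRel L r =
      Subgroup.closure {x : Equiv.Perm Q | ∃ a b : Q, r a b ∧ x = (L a)⁻¹ * L b} :=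
  stmt_12_general mul ld h1 hsm L hL r hequiv hcong
end

section
/- Let Q be a semimedial left quasigroup. Then the Cayley kernel λ_Q = {(a,b) : L_a = L_b} is a congruence of Q. -/
/-- The Cayley kernel of a semimedial left quasigroup is a congruence. -/
theorem stmt_13 {Q : Type*} (mul ld : Q → Q → Q)
    (h1 : ∀ x y, mul x (ld x y) = y) (h2 : ∀ x y, ld x (mul x y) = y)
    (hsm : ∀ x y z, mul (mul x x) (mul y z) = mul (mul x y) (mul x z)) :
    Equivalence (fun a b : Q => mul a = mul b) ∧
      ∀ a b c d : Q, mul a = mul c → mul b = mul d →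
        mul (mul a b) = mul (mul c d) ∧ mul (ld a b) = mul (ld c d) := by
  -- ld is determined by mul
  have hld : ∀ a c : Q, mul a = mul c → ld a = ld c := by
    intro a c h
    funext w
    have e : ld a w = ld a (mul c (ld c w)) := by rw [h1]
    rw [e, ← h, h2]
  -- L_{x*y} w = L_{x*x} (L_y (ld x w))
  have keym : ∀ x y w : Q, mul (mul x y) w = mul (mul x x) (mul y (ld x w)) := by
    intro x y w
    rw [hsm, h1]
  -- squares
  have hsq : ∀ a c : Q, mul a = mul c → mul (mul a a) = mul (mul c c) := by
    intro a c h
    funext w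
    calc mul (mul a a) w = mul (mul a a) (mul c (ld c w)) := by rw [h1]
      _ = mul (mul a c) (mul a (ld c w)) := hsm a c (ld c w)
      _ = mul (mul c c) (mul c (ld c w)) := by rw [h]
      _ = mul (mul c c) w := by rw [h1]
  refine ⟨⟨fun a => rfl, fun h => h.symm, fun h h' => h.trans h'⟩, ?_⟩
  intro a b c d hac hbd
  constructor
  · funext w
    calc mul (mul a b) w = mul (mul a a) (mul b (ld a w)) := keym a b w
      _ = mul (mul c c) (mul d (ld c w)) := by rw [hsq a c hac, hbd, hld a c hac]
      _ = mul (mul c d) w := (keym c d w).symm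
  · funext w
    have key : ∀ x y z, mul (ld x y) z = ld (mul x x) (mul y (mul x z)) := by
      intro x y z
      have := hsm x (ld x y) z
      rw [h1] at this
      rw [← this, h2]
    rw [key, key, hld _ _ (hsq a c hac), hbd, hac]
end

section
/- Let Q be a semimedial left quasigroup and suppose a*a = b*b for distinct elements a ≠ b. Then the permutation L_a^{-1} ∘ L_b has no fixed point in Q. -/
/-- In a semimedial left quasigroup, if a*a = b*b with a ≠ b, then L_a⁻¹ L_b is
fixed-point-free. -/
theorem stmt_14 {Q : Type*} (mul ld : Q → Q → Q)
    (h1 : ∀ x y, mul x (ld x y) = y) (h2 : ∀ x y, ld x (mul x y) = y)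
    (hsm : ∀ x y z, mul (mul x x) (mul y z) = mul (mul x y) (mul x z)) :
    ∀ a b : Q, mul a a = mul b b → a ≠ b → ∀ x : Q, ld a (mul b x) ≠ x := by
  intro a b hsq hne x hfix
  -- From the fixed point, b*x = a*x
  have hbx : mul b x = mul a x := by
    conv_lhs => rw [← h1 a (mul b x), hfix]
  -- For all t, a*t = b*t
  have key : ∀ t, mul a t = mul b t := by
    intro t
    have e : mul (mul a x) (mul a t) = mul (mul a x) (mul b t) := by
      rw [← hsm a x t, hsq, hsm b x t, hbx]
    calc mul a t = ld (mul a x) (mul (mul a x) (mul a t)) := (h2 _ _).symm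
      _ = ld (mul a x) (mul (mul a x) (mul b t)) := by rw [e]
      _ = mul b t := h2 _ _
  -- Take t = b : a*b = b*b = a*a, hence b = a
  have hab : mul a b = mul a a := by rw [key b, hsq]
  apply hne
  calc a = ld a (mul a a) := (h2 a a).symm
    _ = ld a (mul a b) := by rw [hab]
    _ = b := h2 a b
end

section
/- Every rack is a 2-divisible semimedial left quasigroup: if Q satisfies x*(y*z)=(x*y)*(x*z), then Q satisfies (x*x)*(y*z)=(x*y)*(x*z) and the squaring map s(a)=a*a is a bijection of Q. -/
/-- Racks are 2-divisible semimedial left quasigroups. -/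
theorem stmt_15 {Q : Type*} (mul ld : Q → Q → Q)
    (h1 : ∀ x y, mul x (ld x y) = y) (h2 : ∀ x y, ld x (mul x y) = y)
    (hLD : ∀ x y z, mul x (mul y z) = mul (mul x y) (mul x z)) :
    (∀ x y z, mul (mul x x) (mul y z) = mul (mul x y) (mul x z)) ∧
      Function.Bijective (fun a : Q => mul a a) := by
  have key : ∀ x z, mul (mul x x) (mul x z) = mul x (mul x z) := fun x z => (hLD x x z).symm
  have ts : ∀ a, ld (mul a a) (mul a a) = a := by
    intro a
    have h : mul (mul a a) a = mul a a := by
      have := hLD a a (ld a a)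
      rw [h1] at this
      exact this.symm
    calc ld (mul a a) (mul a a) = ld (mul a a) (mul (mul a a) a) := by rw [h]
      _ = a := h2 _ _
  constructor
  · intro x y z
    have h := key x (ld x (mul y z))
    rw [h1] at h
    rw [h, hLD]
  · constructor
    · intro a b hab
      simp only at hab
      have := ts a
      rw [hab, ts b] at this
      exact this.symm
    · intro a
      refine ⟨ld a a, ?_⟩
      have h : mul a (mul (ld a a) (ld a a)) = mul a a := by rw [hLD, h1]
      have := congrArg (ld a) h
      rwa [h2, h2] at this
end

section
/- Let (Q,·) be a quandle and f an automorphism of (Q,·). Define x *_f y = f(x·y). Then (Q,*_f) is a 2-divisible semimedial left quasigroup with squaring map equal to f. Conversely, if (Q,*) is a 2-divisible semimedial left quasigroup with squaring bijection s, then x ·_s y = s^{-1}(x*y) defines a quandle operation on Q (idempotent and left distributive left quasigroup) and s is an automorphism of (Q,·_s). -/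
universe u

/-- Isomorphism between quandles with a distinguished automorphism and
2-divisible semimedial left quasigroups (object level). -/
theorem stmt_16 :
    (∀ (Q : Type u) (qmul qd : Q → Q → Q),
      (∀ x y, qmul x (qd x y) = y) → (∀ x y, qd x (qmul x y) = y) →
      (∀ x, qmul x x = x) →
      (∀ x y z, qmul x (qmul y z) = qmul (qmul x y) (qmul x z)) →
      ∀ f : Q → Q, Function.Bijective f →
        (∀ x y, f (qmul x y) = qmul (f x) (f y)) →
        ∀ m : Q → Q → Q, (∀ x y, m x y = f (qmul x y)) →
          (∃ ld' : Q → Q → Q,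
            (∀ x y, m x (ld' x y) = y) ∧ (∀ x y, ld' x (m x y) = y)) ∧
          (∀ x y z, m (m x x) (m y z) = m (m x y) (m x z)) ∧
          (∀ x, m x x = f x) ∧
          Function.Bijective (fun a : Q => m a a)) ∧
    (∀ (Q : Type u) (mul ld : Q → Q → Q),
      (∀ x y, mul x (ld x y) = y) → (∀ x y, ld x (mul x y) = y) →
      (∀ x y z, mul (mul x x) (mul y z) = mul (mul x y) (mul x z)) →
      ∀ si : Q → Q, (∀ a, si (mul a a) = a) → (∀ a, mul (si a) (si a) = a) →
        ∀ q : Q → Q → Q, (∀ x y, q x y = si (mul x y)) →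
          (∃ d : Q → Q → Q,
            (∀ x y, q x (d x y) = y) ∧ (∀ x y, d x (q x y) = y)) ∧
          (∀ x, q x x = x) ∧
          (∀ x y z, q x (q y z) = q (q x y) (q x z)) ∧
          (∀ x y, mul (q x y) (q x y) = q (mul x x) (mul y y)) ∧
          Function.Bijective (fun a : Q => mul a a)) := by
  constructor
  · intro Q qmul qd h1 h2 hidem hdist f hf hhom m hm
    obtain ⟨g, hgl, hgr⟩ := Function.bijective_iff_has_inverse.mp hf
    refine ⟨⟨fun x y => qd x (g y),
        fun x y => by show m x (qd x (g y)) = y; rw [hm, h1, hgr],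
        fun x y => by show qd x (g (m x y)) = y; rw [hm, hgl, h2]⟩, ?_, ?_, ?_⟩
    · intro x y z
      simp only [hm, hidem]
      rw [← hhom, ← hhom, hdist]
    · intro x; rw [hm, hidem]
    · have : (fun a : Q => m a a) = f := by
        funext a; rw [hm, hidem]
      rw [this]; exact hf
  · intro Q mul ld h1 h2 hsm si hsil hsir q hq
    -- squaring is a homomorphism
    have hshom : ∀ x y, mul (mul x y) (mul x y) = mul (mul x x) (mul y y) := by
      intro x y; rw [hsm]
    -- squaring is injective (si is a left inverse)
    have hsinj : Function.Injective (fun a : Q => mul a a) := by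
      intro a b hab
      have := congrArg si hab
      simpa [hsil] using this
    refine ⟨⟨fun x y => ld x (mul y y),
        fun x y => by show q x (ld x (mul y y)) = y; rw [hq, h1, hsil],
        fun x y => by show ld x (mul (q x y) (q x y)) = y; rw [hq, hsir, h2]⟩,
        ?_, ?_, ?_, ?_⟩
    · intro x; rw [hq, hsil]
    · intro x y z
      simp only [hq]
      apply congrArg
      apply hsinj
      show mul (mul x (si (mul y z))) (mul x (si (mul y z)))
          = mul (mul (si (mul x y)) (si (mul x z))) (mul (si (mul x y)) (si (mul x z)))
      rw [hshom, hsir, hshom, hsir, hsir, hsm]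
    · intro x y
      rw [hq, hq, hsir, ← hshom, hsil]
    · exact Function.bijective_iff_has_inverse.mpr ⟨si, hsil, hsir⟩
end

section
/- Let Q be a left quasigroup. Then Q is medial, i.e., satisfies (x*y)*(z*u) = (x*z)*(y*u), if and only if Q is semimedial and the displacement group Dis(Q) is abelian. -/
/-- A left quasigroup is medial iff it is semimedial and Dis(Q) is abelian. -/
theorem stmt_17 {Q : Type*} (mul ld : Q → Q → Q)
    (h1 : ∀ x y, mul x (ld x y) = y) (h2 : ∀ x y, ld x (mul x y) = y)
    (L : Q → Equiv.Perm Q) (hL : ∀ a b : Q, L a b = mul a b) :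
    (∀ x y z u : Q, mul (mul x y) (mul z u) = mul (mul x z) (mul y u)) ↔
      ((∀ x y z : Q, mul (mul x x) (mul y z) = mul (mul x y) (mul x z)) ∧
        ∀ g ∈ Dis L, ∀ h ∈ Dis L, g * h = h * g) := by
  have hinv : ∀ a b, (L a)⁻¹ b = ld a b := by
    intro a b
    rw [Equiv.Perm.inv_def, Equiv.symm_apply_eq, hL, h1]
  constructor
  · intro hm
    have I' : ∀ x p q, L (mul x p) * L q = L (mul x q) * L p := by
      intro x p q
      ext u
      simp only [Equiv.Perm.mul_apply, hL]
      exact hm x p q u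
    have Ic : ∀ x b c, L b * L (ld x c) = L c * L (ld x b) := by
      intro x b c
      have h := I' x (ld x b) (ld x c)
      rwa [h1, h1] at h
    have E1 : ∀ a b c, (L b)⁻¹ * L c = L (ld a c) * (L (ld a b))⁻¹ := by
      intro a b c
      rw [inv_mul_eq_iff_eq_mul, ← mul_assoc, Ic a b c, mul_assoc,
        mul_inv_cancel, mul_one]
    have gen_comm : ∀ a b c d : Q,
        (L a * (L b)⁻¹) * (L c * (L d)⁻¹) = (L c * (L d)⁻¹) * (L a * (L b)⁻¹) := by
      intro a b c d
      have inv_swap : (L (ld a b))⁻¹ * (L d)⁻¹ = (L (ld a d))⁻¹ * (L b)⁻¹ := by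
        have h := congrArg (·⁻¹) (Ic a d b)
        simpa [mul_inv_rev] using h
      calc L a * (L b)⁻¹ * (L c * (L d)⁻¹)
          = L a * ((L b)⁻¹ * L c) * (L d)⁻¹ := by group
        _ = L a * (L (ld a c) * (L (ld a b))⁻¹) * (L d)⁻¹ := by rw [E1]
        _ = (L a * L (ld a c)) * ((L (ld a b))⁻¹ * (L d)⁻¹) := by group
        _ = (L c * L (ld a a)) * ((L (ld a d))⁻¹ * (L b)⁻¹) := by
            rw [Ic a a c, inv_swap]
        _ = L c * (L (ld a a) * (L (ld a d))⁻¹) * (L b)⁻¹ := by group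
        _ = L c * ((L d)⁻¹ * L a) * (L b)⁻¹ := by rw [E1]
        _ = L c * (L d)⁻¹ * (L a * (L b)⁻¹) := by group
    refine ⟨fun x y z => hm x x y z, ?_⟩
    intro g hg h hh
    refine Subgroup.closure_induction₂
      (p := fun x y _ _ => x * y = y * x) ?_ ?_ ?_ ?_ ?_ ?_ ?_ hg hh
    · rintro x y ⟨a, b, rfl⟩ ⟨c, d, rfl⟩
      exact gen_comm a b c d
    · intro x _; simp
    · intro x _; simp
    · intro x y z _ _ _ hxz hyz
      exact (Commute.mul_left hxz hyz : Commute _ _)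
    · intro y z x _ _ _ hxy hxz
      exact (Commute.mul_right hxy hxz : Commute _ _)
    · intro x y _ _ hxy
      exact (Commute.inv_left hxy : Commute _ _)
    · intro x y _ _ hxy
      exact (Commute.inv_right hxy : Commute _ _)
  · rintro ⟨hs, hd⟩ x y z u
    have Ls : ∀ a b, L (mul a b) = L (mul a a) * L b * (L a)⁻¹ := by
      intro a b
      ext v
      simp only [Equiv.Perm.mul_apply, hL, hinv]
      rw [hs a b (ld a v), h1]
    have mem : ∀ a b : Q, L a * (L b)⁻¹ ∈ Dis L := fun a b =>
      Subgroup.subset_closure ⟨a, b, rfl⟩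
    have comm := hd _ (mem y x) _ (mem z x)
    have key : L y * (L x)⁻¹ * L z = L z * (L x)⁻¹ * L y := by
      have h := comm
      rw [show L y * (L x)⁻¹ * (L z * (L x)⁻¹) = (L y * (L x)⁻¹ * L z) * (L x)⁻¹ by group,
        show L z * (L x)⁻¹ * (L y * (L x)⁻¹) = (L z * (L x)⁻¹ * L y) * (L x)⁻¹ by group] at h
      exact mul_right_cancel h
    have final : L (mul x y) * L z = L (mul x z) * L y := by
      rw [Ls x y, Ls x z, mul_assoc, mul_assoc, ← mul_assoc (L y), key]
      group
    calc mul (mul x y) (mul z u) = (L (mul x y) * L z) u := by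
          simp [Equiv.Perm.mul_apply, hL]
      _ = (L (mul x z) * L y) u := by rw [final]
      _ = mul (mul x z) (mul y u) := by simp [Equiv.Perm.mul_apply, hL]
end

section
/- Let Q be a faithful medial left quasigroup (L_a = L_b implies a = b). Then all right multiplications R_x: a ↦ a*x are injective. -/
/-- In a faithful medial left quasigroup, all right multiplications are
injective. -/
theorem stmt_18 {Q : Type*} (mul ld : Q → Q → Q)
    (h1 : ∀ x y, mul x (ld x y) = y) (h2 : ∀ x y, ld x (mul x y) = y)
    (hmed : ∀ x y z u : Q, mul (mul x y) (mul z u) = mul (mul x z) (mul y u))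
    (hfaith : ∀ a b : Q, mul a = mul b → a = b) :
    ∀ x : Q, Function.Injective fun a => mul a x := by
  intro x a b hab
  simp only at hab
  apply hfaith
  funext z
  apply hfaith
  funext w
  have ha := hmed a x z (ld x w)
  have hb := hmed b x z (ld x w)
  rw [h1] at ha hb
  rw [← ha, ← hb, hab]
end
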